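/- Let A be the adjacency matrix of the fulvene graph (the 6×6 matrix with rows (0,1,0,0,1,0), (1,0,1,0,0,0), (0,1,0,1,0,0), (0,0,1,0,1,1), (1,0,0,1,0,0), (0,0,0,1,0,0)). Then there is NO diagonal matrix D with diagonal entries ±1 such that all entries of D A⁻¹ D are nonnegative; that is, the fulvene graph is not positively invertible. -/
import Mathlib


open Matrix

/-- The adjacency matrix of the fulvene graph. -/
def fulveneA : Matrix (Fin 6) (Fin 6) ℤ :=
  !![0,1,0,0,1,0;
     1,0,1,0,0,0;
     0,1,0,1,0,0;
     0,0,1,0,1,1;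
     1,0,0,1,0,0;
     0,0,0,1,0,0]

def fulveneB : Matrix (Fin 6) (Fin 6) ℤ :=
  !![0,0,0,0,1,-1;
     0,0,1,0,0,-1;
     0,1,0,0,-1,1;
     0,0,0,0,0,1;
     1,0,-1,0,0,1;
     -1,-1,1,1,1,-2]

lemma fulvene_inv : fulveneA⁻¹ = fulveneB := by
  apply Matrix.inv_eq_right_inv
  show fulveneA * fulveneB = 1
  decide

/-- there is no diagonal `±1` matrix `D` making all entries of
`D A⁻¹ D` nonnegative, i.e. the fulvene graph is not positively invertible. -/
theorem stmt5 :
    ¬ ∃ d : Fin 6 → ℤ, (∀ i, d i = 1 ∨ d i = -1) ∧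
      ∀ i j, 0 ≤ (diagonal d * fulveneA⁻¹ * diagonal d) i j := by
  rintro ⟨d, hd, h⟩
  have h55 := h 5 5
  rw [fulvene_inv] at h55
  have : (diagonal d * fulveneB * diagonal d) 5 5 = d 5 * (-2) * d 5 := by
    have hB : fulveneB 5 5 = -2 := by decide
    simp [Matrix.mul_apply, Matrix.diagonal_apply, Fin.sum_univ_six, hB]
  rw [this] at h55
  rcases hd 5 with h5 | h5 <;> rw [h5] at h55 <;> norm_num at h55
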